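/- arXiv:2005.07420 — 2 statements merged into one kernel-verified Lean document; each statement's English description precedes it below -/
import Mathlib

section
/- Assume f satisfies hypothesis (1.1), and let η > 0 be such that f < 0 on (0, η]. If u is a positive bounded entire solution of u_t = Δu + f(u) on ℝ × ℝ^N such that limsup_{|x|→+∞} (sup_{t ≤ 0} u(t,x)) ≤ η, then u is localized in the past, i.e. u(t,x) → 0 as |x| → +∞ uniformly in t ≤ 0. -/
open Set Filter Topology Metric MeasureTheory

noncomputable section

/-- The Laplacian of a real-valued function on `ℝ^N`, defined as the sum of the second
directional derivatives along the coordinate directions. -/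
def lap {N : ℕ} (φ : EuclideanSpace ℝ (Fin N) → ℝ) (x : EuclideanSpace ℝ (Fin N)) : ℝ :=
  ∑ i : Fin N, fderiv ℝ (fun y => fderiv ℝ φ y (EuclideanSpace.single i 1)) x
    (EuclideanSpace.single i 1)

/-- `u` is a classical (`C^{1,2}`) entire solution of `u_t = Δu + f(u)` on `ℝ × ℝ^N`. -/
def IsEntireSolution {N : ℕ} (f : ℝ → ℝ) (u : ℝ → EuclideanSpace ℝ (Fin N) → ℝ) : Prop :=
  Continuous (fun p : ℝ × EuclideanSpace ℝ (Fin N) => u p.1 p.2) ∧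
  (∀ x, Differentiable ℝ fun t => u t x) ∧
  (∀ t, ContDiff ℝ 2 (u t)) ∧
  ∀ t x, deriv (fun s => u s x) t = lap (u t) x + f (u t x)

/-- `u` is bounded on `ℝ × ℝ^N`. -/
def BoundedSol {N : ℕ} (u : ℝ → EuclideanSpace ℝ (Fin N) → ℝ) : Prop :=
  ∃ C : ℝ, ∀ t x, |u t x| ≤ C

/-- `u` is positive on `ℝ × ℝ^N`. -/
def PositiveSol {N : ℕ} (u : ℝ → EuclideanSpace ℝ (Fin N) → ℝ) : Prop :=
  ∀ t x, 0 < u t x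

/-- `u(t,x) → 0` as `|x| → +∞`, uniformly in `t ≤ 0`. -/
def LocalizedInPast {N : ℕ} (u : ℝ → EuclideanSpace ℝ (Fin N) → ℝ) : Prop :=
  ∀ ε > (0:ℝ), ∃ R : ℝ, ∀ t ≤ (0:ℝ), ∀ x : EuclideanSpace ℝ (Fin N), R ≤ ‖x‖ → |u t x| < ε

/-- The set `E` of positive localized steady states: `C²` solutions of
`Δφ + f(φ) = 0`, `φ > 0` in `ℝ^N`, `φ(x) → 0` as `|x| → ∞`. -/
def steadySet (N : ℕ) (f : ℝ → ℝ) : Set (EuclideanSpace ℝ (Fin N) → ℝ) :=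
  {φ | ContDiff ℝ 2 φ ∧ (∀ x, lap φ x + f (φ x) = 0) ∧ (∀ x, 0 < φ x) ∧
       (∀ ε > (0:ℝ), ∃ R : ℝ, ∀ x : EuclideanSpace ℝ (Fin N), R ≤ ‖x‖ → φ x < ε)}

/-- `F(s) = ∫₀^s f(σ) dσ`. -/
def Fint (f : ℝ → ℝ) (s : ℝ) : ℝ := ∫ σ in (0:ℝ)..s, f σ

/-- Hypothesis (1.1): `f` is `C¹` on `[0,∞)` with `f(0) = 0` and `f'(0) < 0`. -/
def Hyp11 (f : ℝ → ℝ) : Prop :=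
  ContDiffOn ℝ 1 f (Ici 0) ∧ f 0 = 0 ∧ derivWithin f (Ici 0) 0 < 0

/-- `m` is the quantity `m_φ`: `0 < m < max φ`, `f(m) = 0`, `f > 0` on `(m, max φ]`. -/
def IsMlow {N : ℕ} (f : ℝ → ℝ) (φ : EuclideanSpace ℝ (Fin N) → ℝ) (m : ℝ) : Prop :=
  0 < m ∧ m < (⨆ x, φ x) ∧ f m = 0 ∧ ∀ s ∈ Ioc m (⨆ x, φ x), 0 < f s

/-- Hypothesis (1.12): `F < 0` on `(0, m_φ]` for every `φ ∈ E`. -/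
def Hyp112 (N : ℕ) (f : ℝ → ℝ) : Prop :=
  ∀ φ ∈ steadySet N f, ∀ m : ℝ, IsMlow f φ m → ∀ s ∈ Ioc (0:ℝ) m, Fint f s < 0

/-- The set `{s ≥ max φ : f(s) = 0}`, whose infimum (in `(max φ, +∞]`) is `M_φ`. -/
def upperZeros {N : ℕ} (f : ℝ → ℝ) (φ : EuclideanSpace ℝ (Fin N) → ℝ) : Set ℝ :=
  {s : ℝ | (⨆ x, φ x) ≤ s ∧ f s = 0}

/-- A traveling-front profile with speed `c`, decreasing, connecting `M` at `−∞` to `0`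
at `+∞`: `φ'' + cφ' + f(φ) = 0`, `φ' < 0`, `φ(−∞) = M`, `φ(+∞) = 0`. -/
def IsFront (f : ℝ → ℝ) (M c : ℝ) (φ : ℝ → ℝ) : Prop :=
  ContDiff ℝ 2 φ ∧ (∀ x, deriv (deriv φ) x + c * deriv φ x + f (φ x) = 0) ∧
  (∀ x, deriv φ x < 0) ∧ Tendsto φ atBot (𝓝 M) ∧ Tendsto φ atTop (𝓝 0)

/-- `u(t,·) → φ` uniformly in `ℝ^N` as `t → −∞`. -/
def ConvToAtPast {N : ℕ} (u : ℝ → EuclideanSpace ℝ (Fin N) → ℝ)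
    (φ : EuclideanSpace ℝ (Fin N) → ℝ) : Prop :=
  ∀ ε > (0:ℝ), ∃ T : ℝ, ∀ t ≤ T, ∀ x, |u t x - φ x| < ε

/-- `u(t,·) → φ` uniformly in `ℝ^N` as `t → +∞`. -/
def ConvToAtFuture {N : ℕ} (u : ℝ → EuclideanSpace ℝ (Fin N) → ℝ)
    (φ : EuclideanSpace ℝ (Fin N) → ℝ) : Prop :=
  ∀ ε > (0:ℝ), ∃ T : ℝ, ∀ t ≥ T, ∀ x, |u t x - φ x| < ε

/-- Alternative (iii) of Theorem 1.1: there are a continuous `ξ : ℝ → ℝ` and constants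
`M, c > 0` with `f(M) = 0`, `f'(M) ≤ 0`, `c` the speed of a front connecting `M` to `0`,
such that `u` spreads at speed `c`, the transition between `M` and `0` occurring around
the radial position `ξ(t)`. -/
def Spreading {N : ℕ} (f : ℝ → ℝ) (u : ℝ → EuclideanSpace ℝ (Fin N) → ℝ) : Prop :=
  ∃ ξ : ℝ → ℝ, Continuous ξ ∧ ∃ M c : ℝ, 0 < M ∧ 0 < c ∧
    f M = 0 ∧ derivWithin f (Ici 0) M ≤ 0 ∧ (∃ φ : ℝ → ℝ, IsFront f M c φ) ∧
    (∀ ε > (0:ℝ), ∃ A : ℝ, ∀ A' ≥ A, ∃ T : ℝ, ∀ t ≥ T, ∀ x : EuclideanSpace ℝ (Fin N),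
      (‖x‖ ≤ ξ t - A' → |u t x - M| < ε) ∧ (ξ t + A' ≤ ‖x‖ → |u t x| < ε)) ∧
    Tendsto (fun t => ξ t / t) atTop (𝓝 c)

set_option maxHeartbeats 1600000

lemma r15_second_deriv_nonneg {g g1 : ℝ → ℝ} {c : ℝ}
    (hmin : IsLocalMin g 0) (hg : ∀ᶠ r in 𝓝 (0:ℝ), HasDerivAt g (g1 r) r)
    (hg1 : HasDerivAt g1 c 0) : 0 ≤ c := by
  by_contra hc
  push_neg at hc
  have h0 : g1 0 = 0 := hmin.hasDerivAt_eq_zero hg.self_of_nhds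
  have hs : Tendsto (slope g1 0) (𝓝[>] (0:ℝ)) (𝓝 c) :=
    (hasDerivAt_iff_tendsto_slope.1 hg1).mono_left
      (nhdsWithin_mono _ (fun r hr => ne_of_gt hr))
  have hev : ∀ᶠ r in 𝓝[>] (0:ℝ), slope g1 0 r < c/2 :=
    hs.eventually_lt_const (by linarith)
  obtain ⟨ρ, hρ, hρs⟩ := mem_nhdsGT_iff_exists_Ioc_subset.1 hev
  obtain ⟨δ, hδ, hδs⟩ := Metric.eventually_nhds_iff.1 (hg.and hmin)
  set r₁ : ℝ := min (δ/2) ρ with hr₁def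
  have hr₁ : 0 < r₁ := lt_min (by linarith) hρ
  have hmem : ∀ r ∈ Icc (0:ℝ) r₁, dist r (0:ℝ) < δ := by
    intro r hr
    rw [Real.dist_eq, sub_zero, abs_of_nonneg hr.1]
    calc r ≤ r₁ := hr.2
    _ ≤ δ/2 := min_le_left _ _
    _ < δ := by linarith
  have hMVT := exists_hasDerivAt_eq_slope g g1 (show (0:ℝ) < r₁ from hr₁)
    (fun x hx => ((hδs (hmem x hx)).1).continuousAt.continuousWithinAt)
    (fun x hx => (hδs (hmem x ⟨le_of_lt hx.1, le_of_lt hx.2⟩)).1)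
  obtain ⟨ξ, hξ, hξeq⟩ := hMVT
  have hg1ξ : g1 ξ < 0 := by
    have hξρ : ξ ∈ Ioc (0:ℝ) ρ := ⟨hξ.1, le_trans (le_of_lt hξ.2) (min_le_right _ _)⟩
    have hsl : slope g1 0 ξ < c / 2 := hρs hξρ
    have hslope : slope g1 0 ξ = g1 ξ / ξ := by
      rw [slope_def_field, h0]; ring
    rw [hslope] at hsl
    have : g1 ξ < (c/2) * ξ := by
      rw [div_lt_iff₀ hξ.1] at hsl; linarith
    nlinarith [hξ.1]
  have hge : g 0 ≤ g r₁ := (hδs (hmem r₁ ⟨le_of_lt hr₁, le_rfl⟩)).2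
  rw [hξeq] at hg1ξ
  have : 0 ≤ (g r₁ - g 0) / (r₁ - 0) := by
    apply div_nonneg (by linarith) (by linarith)
  linarith

lemma r15_lap_summand_nonneg {N : ℕ} {W : EuclideanSpace ℝ (Fin N) → ℝ}
    {x : EuclideanSpace ℝ (Fin N)}
    (hmin : IsLocalMin W x)
    (hd : ∀ᶠ y in 𝓝 x, DifferentiableAt ℝ W y)
    (j : Fin N)
    (hd2 : DifferentiableAt ℝ (fun y => fderiv ℝ W y (EuclideanSpace.single j 1)) x) :
    0 ≤ fderiv ℝ (fun y => fderiv ℝ W y (EuclideanSpace.single j 1)) x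
        (EuclideanSpace.single j 1) := by
  set e : EuclideanSpace ℝ (Fin N) := EuclideanSpace.single j 1 with he
  set ℓ : ℝ → EuclideanSpace ℝ (Fin N) := fun r => x + r • e with hℓdef
  have hℓ : ∀ r : ℝ, HasDerivAt ℓ e r := by
    intro r
    have h1 : HasDerivAt (fun r : ℝ => r • e) ((1:ℝ) • e) r :=
      (hasDerivAt_id r).smul_const e
    have h2 := h1.const_add x
    rw [one_smul] at h2
    exact h2
  have hℓ0 : ℓ 0 = x := by simp [hℓdef]
  have hℓt : Tendsto ℓ (𝓝 0) (𝓝 x) := by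
    have := (hℓ 0).continuousAt
    rwa [ContinuousAt, hℓ0] at this
  have hG : ∀ᶠ r in 𝓝 (0:ℝ), HasDerivAt (fun r => W (ℓ r))
      ((fun y => fderiv ℝ W y e) (ℓ r)) r := by
    filter_upwards [hℓt.eventually hd] with r hr
    exact (hr.hasFDerivAt.comp_hasDerivAt r (hℓ r))
  have hg1 : HasDerivAt (fun r => fderiv ℝ W (ℓ r) e)
      (fderiv ℝ (fun y => fderiv ℝ W y e) x e) 0 := by
    have h2 := hd2.hasFDerivAt
    rw [← hℓ0] at h2
    have h3 := h2.comp_hasDerivAt 0 (hℓ 0)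
    rw [hℓ0] at h3
    exact h3
  have hminG : IsLocalMin (fun r => W (ℓ r)) 0 := by
    have : ∀ᶠ r in 𝓝 (0:ℝ), W x ≤ W (ℓ r) := hℓt.eventually hmin
    simpa [IsLocalMin, IsMinFilter, hℓ0] using this
  exact r15_second_deriv_nonneg hminG hG hg1

lemma r15_hasFDerivAt_invnorm {N : ℕ} {x : EuclideanSpace ℝ (Fin N)} (hx : x ≠ 0) :
    HasFDerivAt (fun y : EuclideanSpace ℝ (Fin N) => ‖y‖⁻¹)
      ((-(‖x‖⁻¹^3)) • (innerSL ℝ x)) x := by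
  have hn : 0 < ‖x‖ := norm_pos_iff.2 hx
  have hsq : (0:ℝ) < ‖x‖^2 := by positivity
  have hsqrt : Real.sqrt (‖x‖^2) = ‖x‖ := Real.sqrt_sq (le_of_lt hn)
  have h1 : HasDerivAt (fun r : ℝ => (Real.sqrt r)⁻¹)
      (-(1/(2*Real.sqrt (‖x‖^2))) / (Real.sqrt (‖x‖^2))^2) (‖x‖^2) := by
    exact (Real.hasDerivAt_sqrt (ne_of_gt hsq)).inv (by rw [hsqrt]; exact ne_of_gt hn)
  have h2 : HasFDerivAt (fun y : EuclideanSpace ℝ (Fin N) => ‖y‖^2)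
      (2 • (innerSL ℝ x)) x := (hasStrictFDerivAt_norm_sq x).hasFDerivAt
  have h3 := h1.comp_hasFDerivAt x h2
  have hfun : ((fun r : ℝ => (Real.sqrt r)⁻¹) ∘ fun y : EuclideanSpace ℝ (Fin N) => ‖y‖^2)
      = fun y : EuclideanSpace ℝ (Fin N) => ‖y‖⁻¹ := by
    funext y
    simp [Function.comp, Real.sqrt_sq (norm_nonneg y)]
  rw [hfun] at h3
  refine h3.congr_fderiv ?_
  rw [hsqrt]
  ext v
  simp only [ContinuousLinearMap.smul_apply, smul_eq_mul]
  field_simp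
  ring

lemma r15_hasFDerivAt_h1 {N : ℕ} (j : Fin N) {x : EuclideanSpace ℝ (Fin N)} (hx : x ≠ 0) :
    HasFDerivAt (fun y : EuclideanSpace ℝ (Fin N) => -(y j) * ‖y‖⁻¹^3)
      ((-(x j)) • ((3 * ‖x‖⁻¹^2) • ((-(‖x‖⁻¹^3)) • (innerSL ℝ x)))
        + (‖x‖⁻¹^3) • (-(EuclideanSpace.proj j : EuclideanSpace ℝ (Fin N) →L[ℝ] ℝ))) x := by
  have hc : HasFDerivAt (fun y : EuclideanSpace ℝ (Fin N) => -(y j))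
      (-(EuclideanSpace.proj j : EuclideanSpace ℝ (Fin N) →L[ℝ] ℝ)) x :=
    ((EuclideanSpace.proj j : EuclideanSpace ℝ (Fin N) →L[ℝ] ℝ).hasFDerivAt (x := x)).neg
  have hinv := r15_hasFDerivAt_invnorm hx
  have hcube : HasFDerivAt (fun y : EuclideanSpace ℝ (Fin N) => ‖y‖⁻¹^3)
      ((3 * ‖x‖⁻¹^2) • ((-(‖x‖⁻¹^3)) • (innerSL ℝ x))) x := by
    have h := hinv.mul (hinv.mul hinv)
    have hfe : (fun y : EuclideanSpace ℝ (Fin N) => ‖y‖⁻¹^3)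
        = (fun y => ‖y‖⁻¹) * ((fun y => ‖y‖⁻¹) * fun y => ‖y‖⁻¹) := by
      funext y; simp only [Pi.mul_apply]; ring
    rw [hfe]
    refine h.congr_fderiv ?_
    ext v
    simp only [ContinuousLinearMap.smul_apply, ContinuousLinearMap.add_apply, smul_eq_mul,
      Pi.mul_apply]
    ring
  exact hc.mul hcube

lemma r15_sum_sq {N : ℕ} (x : EuclideanSpace ℝ (Fin N)) : ∑ j, (x j)^2 = ‖x‖^2 := by
  rw [EuclideanSpace.norm_eq, Real.sq_sqrt (by positivity)]
  simp [Real.norm_eq_abs, sq_abs]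

lemma r15_fderiv_W_eval {N : ℕ} (u2 : EuclideanSpace ℝ (Fin N) → ℝ) (hu2 : ContDiff ℝ 2 u2)
    (A B C : ℝ) (j : Fin N) {y : EuclideanSpace ℝ (Fin N)} (hy : y ≠ 0) :
    fderiv ℝ (fun z => A + B * ‖z‖⁻¹ + C * (1 + ‖z‖^2) - u2 z) y (EuclideanSpace.single j 1)
      = B * (-(y j) * ‖y‖⁻¹^3) + C * (2 * (y j))
        - fderiv ℝ u2 y (EuclideanSpace.single j 1) := by
  have hinv := r15_hasFDerivAt_invnorm hy
  have hnsq := (hasStrictFDerivAt_norm_sq y).hasFDerivAt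
  have hu2' := (hu2.differentiable (by norm_num) y).hasFDerivAt
  have hW : HasFDerivAt (fun z : EuclideanSpace ℝ (Fin N) => A + B * ‖z‖⁻¹ + C * (1 + ‖z‖^2) - u2 z)
      ((B • ((-(‖y‖⁻¹^3)) • innerSL ℝ y) + C • (2 • innerSL ℝ y)) - fderiv ℝ u2 y) y :=
    (((hinv.const_mul B).const_add A).add ((hnsq.const_add 1).const_mul C)).sub hu2'
  rw [hW.fderiv]
  simp only [ContinuousLinearMap.coe_sub', Pi.sub_apply, ContinuousLinearMap.add_apply,
    ContinuousLinearMap.smul_apply, smul_eq_mul, innerSL_apply_apply]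
  rw [show (inner ℝ y (EuclideanSpace.single j (1:ℝ)) : ℝ) = y j by
    simp [EuclideanSpace.inner_single_right]]
  ring

lemma r15_lap_decomp {N : ℕ} (u2 : EuclideanSpace ℝ (Fin N) → ℝ) (hu2 : ContDiff ℝ 2 u2)
    (A B C : ℝ) {x : EuclideanSpace ℝ (Fin N)} (hx : x ≠ 0) :
    lap (fun y => A + B * ‖y‖⁻¹ + C * (1 + ‖y‖^2) - u2 y) x
      = B * ((3 - (N:ℝ)) * ‖x‖⁻¹^3) + C * (2*N) - lap u2 x := by
  have hne : ‖x‖ ≠ 0 := ne_of_gt (norm_pos_iff.2 hx)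
  have key : ∀ j : Fin N,
      fderiv ℝ (fun y => fderiv ℝ (fun z => A + B * ‖z‖⁻¹ + C * (1 + ‖z‖^2) - u2 z) y
          (EuclideanSpace.single j 1)) x (EuclideanSpace.single j 1)
        = (3*B*‖x‖⁻¹^5) * (x j)^2 + (C*2 - B*‖x‖⁻¹^3)
          - fderiv ℝ (fun y => fderiv ℝ u2 y (EuclideanSpace.single j 1)) x
              (EuclideanSpace.single j 1) := by
    intro j
    have heq : (fun y => fderiv ℝ (fun z => A + B * ‖z‖⁻¹ + C * (1 + ‖z‖^2) - u2 z) y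
          (EuclideanSpace.single j 1))
        =ᶠ[𝓝 x] (fun y => B * (-(y j) * ‖y‖⁻¹^3) + C * (2 * (y j))
          - fderiv ℝ u2 y (EuclideanSpace.single j 1)) := by
      filter_upwards [IsOpen.eventually_mem isOpen_compl_singleton hx] with y hy
      exact r15_fderiv_W_eval u2 hu2 A B C j hy
    rw [heq.fderiv_eq]
    have hg3diff : DifferentiableAt ℝ
        (fun y => fderiv ℝ u2 y (EuclideanSpace.single j 1)) x := by
      have h1 : ContDiff ℝ 1 (fderiv ℝ u2) := hu2.fderiv_right (by norm_num)
      exact ((h1.differentiable one_ne_zero) x).clm_apply (differentiableAt_const _)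
    have hBd := r15_hasFDerivAt_h1 j hx
    have hlin : HasFDerivAt (fun y : EuclideanSpace ℝ (Fin N) => (2:ℝ) * (y j))
        ((2:ℝ) • (EuclideanSpace.proj j : EuclideanSpace ℝ (Fin N) →L[ℝ] ℝ)) x :=
      ((EuclideanSpace.proj j : EuclideanSpace ℝ (Fin N) →L[ℝ] ℝ).hasFDerivAt
        (x := x)).const_mul 2
    have hcomb : HasFDerivAt (fun y : EuclideanSpace ℝ (Fin N) => B * (-(y j) * ‖y‖⁻¹^3)
        + C * (2 * (y j)) - fderiv ℝ u2 y (EuclideanSpace.single j 1)) _ x :=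
      ((hBd.const_mul B).add (hlin.const_mul C)).sub hg3diff.hasFDerivAt
    rw [hcomb.fderiv]
    simp only [ContinuousLinearMap.coe_sub', Pi.sub_apply, ContinuousLinearMap.add_apply,
      ContinuousLinearMap.smul_apply, ContinuousLinearMap.neg_apply, smul_eq_mul]
    rw [show ((innerSL ℝ) x) (EuclideanSpace.single j (1:ℝ)) = x j from by
      simp [EuclideanSpace.inner_single_right]]
    rw [show (EuclideanSpace.proj j : EuclideanSpace ℝ (Fin N) →L[ℝ] ℝ)
        (EuclideanSpace.single j 1) = 1 by simp [EuclideanSpace.single_apply]]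
    ring
  unfold lap
  rw [Finset.sum_congr rfl (fun j _ => key j)]
  rw [Finset.sum_sub_distrib, Finset.sum_add_distrib, ← Finset.mul_sum, r15_sum_sq,
    Finset.sum_const, Finset.card_univ, Fintype.card_fin, nsmul_eq_mul]
  have hpow : ‖x‖⁻¹^5 * ‖x‖^2 = ‖x‖⁻¹^3 := by
    field_simp
  linear_combination (3*B) * hpow

lemma r15_W_hasFDerivAt {N : ℕ} (u2 : EuclideanSpace ℝ (Fin N) → ℝ) (hu2 : ContDiff ℝ 2 u2)
    (A B C : ℝ) {y : EuclideanSpace ℝ (Fin N)} (hy : y ≠ 0) :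
    DifferentiableAt ℝ (fun z => A + B * ‖z‖⁻¹ + C * (1 + ‖z‖^2) - u2 z) y := by
  have hinv := r15_hasFDerivAt_invnorm hy
  have hnsq := (hasStrictFDerivAt_norm_sq y).hasFDerivAt
  have hu2' := (hu2.differentiable (by norm_num) y).hasFDerivAt
  exact ((((hinv.const_mul B).const_add A).add
    ((hnsq.const_add 1).const_mul C)).sub hu2').differentiableAt

lemma r15_key_lap_bound {N : ℕ} (u2 : EuclideanSpace ℝ (Fin N) → ℝ) (hu2 : ContDiff ℝ 2 u2)
    (A B C : ℝ) {x : EuclideanSpace ℝ (Fin N)} (hx : x ≠ 0)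
    (hmin : IsLocalMin (fun y => A + B * ‖y‖⁻¹ + C * (1 + ‖y‖^2) - u2 y) x) :
    lap u2 x ≤ B * ((3 - (N:ℝ)) * ‖x‖⁻¹^3) + C * (2*N) := by
  have hd : ∀ᶠ y in 𝓝 x,
      DifferentiableAt ℝ (fun z => A + B * ‖z‖⁻¹ + C * (1 + ‖z‖^2) - u2 z) y := by
    filter_upwards [IsOpen.eventually_mem isOpen_compl_singleton hx] with y hy
    exact r15_W_hasFDerivAt u2 hu2 A B C hy
  have hlapW : 0 ≤ lap (fun y => A + B * ‖y‖⁻¹ + C * (1 + ‖y‖^2) - u2 y) x := by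
    unfold lap
    apply Finset.sum_nonneg
    intro j _
    apply r15_lap_summand_nonneg hmin hd j
    · -- DifferentiableAt of the directional derivative function
      have heq : (fun y => fderiv ℝ (fun z => A + B * ‖z‖⁻¹ + C * (1 + ‖z‖^2) - u2 z) y
            (EuclideanSpace.single j 1))
          =ᶠ[𝓝 x] (fun y => B * (-(y j) * ‖y‖⁻¹^3) + C * (2 * (y j))
            - fderiv ℝ u2 y (EuclideanSpace.single j 1)) := by
        filter_upwards [IsOpen.eventually_mem isOpen_compl_singleton hx] with y hy
        exact r15_fderiv_W_eval u2 hu2 A B C j hy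
      rw [heq.differentiableAt_iff]
      have hg3diff : DifferentiableAt ℝ
          (fun y => fderiv ℝ u2 y (EuclideanSpace.single j 1)) x := by
        have h1 : ContDiff ℝ 1 (fderiv ℝ u2) := hu2.fderiv_right (by norm_num)
        exact ((h1.differentiable one_ne_zero) x).clm_apply (differentiableAt_const _)
      have hBd := (r15_hasFDerivAt_h1 j hx).differentiableAt
      have hlin : DifferentiableAt ℝ (fun y : EuclideanSpace ℝ (Fin N) => (2:ℝ) * (y j)) x :=
        (((EuclideanSpace.proj j : EuclideanSpace ℝ (Fin N) →L[ℝ] ℝ).hasFDerivAt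
          (x := x)).const_mul 2).differentiableAt
      exact ((hBd.const_mul B).add (hlin.const_mul C)).sub hg3diff
  have hdecomp := r15_lap_decomp u2 hu2 A B C hx
  linarith [hlapW, hdecomp.symm.le, hdecomp.le, hdecomp ▸ hlapW]

lemma r15_deriv_nonpos_at_right_min {g : ℝ → ℝ} {a b d : ℝ} (hab : a < b)
    (hg : HasDerivAt g d b) (hmin : ∀ t ∈ Icc a b, g b ≤ g t) : d ≤ 0 := by
  have h := (hg.hasDerivWithinAt (s := Iic b))
  rw [hasDerivWithinAt_iff_tendsto_slope] at h
  have hset : Iic b \ {b} = Iio b := Iic_diff_right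
  rw [hset] at h
  have hne : (𝓝[<] b).NeBot := inferInstance
  refine le_of_tendsto h ?_
  have hIoo : Ioo a b ∈ 𝓝[<] b :=
    mem_nhdsWithin.2 ⟨Ioi a, isOpen_Ioi, hab, fun t ht => ⟨ht.1, ht.2⟩⟩
  filter_upwards [hIoo] with t ht
  have h1 : g b ≤ g t := hmin t ⟨le_of_lt ht.1, le_of_lt ht.2⟩
  have : slope g b t = (g t - g b) / (t - b) := slope_def_field g b t
  rw [this]
  apply div_nonpos_of_nonneg_of_nonpos <;> linarith [ht.2]

lemma r15_exists_delta (f : ℝ → ℝ) (hf : Hyp11 f) (η : ℝ) (hη : 0 < η)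
    (hfneg : ∀ s ∈ Ioc (0:ℝ) η, f s < 0) :
    ∃ δ > 0, ∀ s ∈ Ioc (0:ℝ) (η + δ), f s < 0 := by
  have hcont : ContinuousAt f η :=
    (hf.1.continuousOn.continuousWithinAt (mem_Ici.2 (le_of_lt hη))).continuousAt
      (Ici_mem_nhds hη)
  have hev : ∀ᶠ y in 𝓝 η, f y < 0 :=
    hcont.tendsto.eventually_lt_const (hfneg η ⟨hη, le_rfl⟩)
  obtain ⟨δ', hδ', hδ'f⟩ := Metric.eventually_nhds_iff.1 hev
  refine ⟨δ'/2, by linarith, fun s hs => ?_⟩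
  rcases le_or_gt s η with h | h
  · exact hfneg s ⟨hs.1, h⟩
  · apply hδ'f
    rw [Real.dist_eq, abs_of_nonneg (by linarith)]
    have := hs.2
    linarith

lemma r15_exists_gamma (f : ℝ → ℝ) (hf : Hyp11 f) (P : ℝ) (hP : 0 < P)
    (hneg : ∀ s ∈ Ioc (0:ℝ) P, f s < 0) :
    ∃ γ > 0, ∀ s ∈ Ioc (0:ℝ) P, f s ≤ -γ * s := by
  set d := derivWithin f (Ici 0) 0 with hddef
  have hd : d < 0 := hf.2.2
  have hdiff : DifferentiableWithinAt ℝ f (Ici 0) 0 :=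
    (hf.1.differentiableOn one_ne_zero) 0 self_mem_Ici
  have hder : HasDerivWithinAt f d (Ici 0) 0 := hdiff.hasDerivWithinAt
  rw [hasDerivWithinAt_iff_tendsto_slope] at hder
  rw [Ici_sdiff_left] at hder
  have hev : ∀ᶠ s in 𝓝[>] (0:ℝ), slope f 0 s < d/2 :=
    hder.eventually_lt_const (by linarith)
  obtain ⟨s₀', hs₀', hsub⟩ := mem_nhdsGT_iff_exists_Ioc_subset.1 hev
  set s₀ : ℝ := min s₀' P with hs₀def
  have hs₀pos : 0 < s₀ := lt_min hs₀' hP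
  have hsmall : ∀ s ∈ Ioc (0:ℝ) s₀, f s ≤ d/2 * s := by
    intro s hs
    have h1 : slope f 0 s < d/2 := hsub ⟨hs.1, le_trans hs.2 (min_le_left _ _)⟩
    rw [slope_def_field] at h1
    rw [hf.2.1, sub_zero, sub_zero] at h1
    rw [div_lt_iff₀ hs.1] at h1
    linarith
  have hcompact : IsCompact (Icc s₀ P) := isCompact_Icc
  have hconts : ContinuousOn f (Icc s₀ P) :=
    hf.1.continuousOn.mono (fun t ht => le_trans (le_of_lt hs₀pos) ht.1)
  obtain ⟨m, hm, hmax⟩ := hcompact.exists_isMaxOn (nonempty_Icc.2 (min_le_right _ _)) hconts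
  have hfm : f m < 0 := hneg m ⟨lt_of_lt_of_le hs₀pos hm.1, hm.2⟩
  set ρ : ℝ := -f m with hρdef
  have hρpos : 0 < ρ := by simp [hρdef]; linarith
  refine ⟨min (-(d/2)) (ρ/P), lt_min (by linarith) (div_pos hρpos hP), fun s hs => ?_⟩
  rcases le_or_gt s s₀ with h | h
  · have h1 := hsmall s ⟨hs.1, h⟩
    have h2 : min (-(d/2)) (ρ/P) ≤ -(d/2) := min_le_left _ _
    nlinarith [hs.1]
  · have h1 : f s ≤ f m := hmax ⟨le_of_lt h, hs.2⟩
    have h2 : min (-(d/2)) (ρ/P) ≤ ρ/P := min_le_right _ _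
    have h3 : (ρ/P) * s ≤ ρ := by
      rw [div_mul_eq_mul_div, div_le_iff₀ hP]
      nlinarith [hs.2, le_of_lt hρpos]
    nlinarith [hs.1]

lemma r15_step1_arith {B h R κ c3 : ℝ} (hB : 0 < B) (hh : 0 < h) (hhR : h ≤ R⁻¹)
    (hR : 0 < R) (hκ : κ = 2/R^2) (hc3 : c3 ≤ 2) : B * (c3 * h^3) ≤ κ * (B * h) := by
  have hRinv : 0 < R⁻¹ := by positivity
  have h1 : h^2 ≤ R⁻¹^2 := by nlinarith
  have h2 : c3 * h^2 ≤ 2 * R⁻¹^2 := by nlinarith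
  have h3 : κ = 2 * R⁻¹^2 := by rw [hκ]; field_simp
  rw [h3]
  have h4 := mul_le_mul_of_nonneg_right h2 (le_of_lt (mul_pos hB hh))
  nlinarith [h4]

lemma r15_contra_arith {γ A B Cc hinv r2 lapv fv uv κ K Nn : ℝ}
    (hγ : 0 < γ) (hB : 0 < B) (hC : 0 < Cc) (hhinv : 0 < hinv)
    (hr2 : 0 < r2) (hNn : 1 ≤ Nn)
    (hlap : lapv ≤ κ * (B * hinv) + Cc * (2*Nn))
    (hfv : fv ≤ -γ * uv)
    (hzero : A + B * hinv + Cc * (1 + r2) - uv = 0)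
    (hK : K = 2*Nn)
    (hder : -γ * A + κ * (B * hinv) + K * (Cc * (1 + r2)) - (lapv + fv) ≤ 0) : False := by
  subst hK
  have hNpos : (0:ℝ) < Nn := by linarith
  have huv : uv = A + B * hinv + Cc * (1 + r2) := by linarith
  subst huv
  nlinarith [mul_pos hγ (mul_pos hB hhinv), mul_pos (mul_pos hNpos hC) hr2,
    mul_pos hγ hC, mul_pos (mul_pos hγ hC) hr2]

lemma r15_key {N : ℕ} (hN : 1 ≤ N) (f : ℝ → ℝ)
    (u : ℝ → EuclideanSpace ℝ (Fin N) → ℝ)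
    (hsol : IsEntireSolution f u) (hpos : PositiveSol u)
    (Cu : ℝ) (hCu : ∀ t x, |u t x| ≤ Cu)
    (P γ R₀ : ℝ) (hPpos : 0 < P) (hγ : 0 < γ) (hR₀ : 0 < R₀)
    (hγf : ∀ s ∈ Ioc (0:ℝ) P, f s ≤ -γ * s)
    (hbound : ∀ t ≤ (0:ℝ), ∀ x : EuclideanSpace ℝ (Fin N), R₀ ≤ ‖x‖ → u t x < P)
    (s t₀ : ℝ) (hst : s ≤ t₀) (ht₀ : t₀ ≤ 0) (σ : ℝ) (hσ : 0 < σ)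
    (t : ℝ) (ht : t ∈ Icc s t₀) (x : EuclideanSpace ℝ (Fin N)) (hx : R₀ ≤ ‖x‖) :
    u t x < P * Real.exp (-γ*(t-s)) + P * R₀ * Real.exp ((2/R₀^2)*(t-s)) * ‖x‖⁻¹
          + σ * Real.exp ((2*(N:ℝ))*t) * (1 + ‖x‖^2) := by
  set κ : ℝ := 2/R₀^2 with hκdef
  set K : ℝ := 2*(N:ℝ) with hKdef
  have hκ : 0 < κ := by positivity
  have hK : 0 < K := by
    have : (1:ℝ) ≤ (N:ℝ) := by exact_mod_cast hN
    simp only [hKdef]; linarith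
  set w : ℝ × EuclideanSpace ℝ (Fin N) → ℝ := fun p =>
    P * Real.exp (-γ*(p.1-s)) + P * R₀ * Real.exp (κ*(p.1-s)) * ‖p.2‖⁻¹
      + σ * Real.exp (K*p.1) * (1 + ‖p.2‖^2) - u p.1 p.2 with hwdef
  -- reduce goal to 0 < w (t, x)
  suffices hgoal : 0 < w (t, x) by
    simp only [hwdef] at hgoal; linarith
  by_contra hcon
  push_neg at hcon
  -- the bad set S
  set D : Set (ℝ × EuclideanSpace ℝ (Fin N)) := {p | p.1 ∈ Icc s t₀ ∧ R₀ ≤ ‖p.2‖} with hDdef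
  have hDclosed : IsClosed D := by
    have h1 : IsClosed {p : ℝ × EuclideanSpace ℝ (Fin N) | p.1 ∈ Icc s t₀} :=
      isClosed_Icc.preimage continuous_fst
    have h2 : IsClosed {p : ℝ × EuclideanSpace ℝ (Fin N) | R₀ ≤ ‖p.2‖} :=
      isClosed_Ici.preimage (continuous_norm.comp continuous_snd)
    exact h1.inter h2
  have hwcont : ContinuousOn w D := by
    have hnorm : ContinuousOn (fun p : ℝ × EuclideanSpace ℝ (Fin N) => ‖p.2‖⁻¹) D := by
      apply ContinuousOn.inv₀ (continuous_norm.comp continuous_snd).continuousOn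
      intro p hp
      have : (0:ℝ) < ‖p.2‖ := lt_of_lt_of_le hR₀ hp.2
      exact ne_of_gt this
    apply ContinuousOn.sub
    · apply ContinuousOn.add
      apply ContinuousOn.add
      · exact (continuous_const.mul ((Real.continuous_exp.comp
          (continuous_const.mul (continuous_fst.sub continuous_const))))).continuousOn
      · exact (((continuous_const.mul (Real.continuous_exp.comp
          (continuous_const.mul (continuous_fst.sub continuous_const)))).continuousOn).mul hnorm)
      · exact ((continuous_const.mul (Real.continuous_exp.comp
          (continuous_const.mul continuous_fst))).mul
          (continuous_const.add ((continuous_norm.comp continuous_snd).pow 2))).continuousOn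
    · exact hsol.1.continuousOn
  set S : Set (ℝ × EuclideanSpace ℝ (Fin N)) := D ∩ w ⁻¹' (Iic 0) with hSdef
  have hSclosed : IsClosed S := hwcont.preimage_isClosed_of_isClosed hDclosed isClosed_Iic
  have hSne : S.Nonempty := ⟨(t, x), ⟨⟨ht.1, ht.2⟩, hx⟩, hcon⟩
  -- S is bounded
  set ρc : ℝ := Real.sqrt (Cu / (σ * Real.exp (K*s))) with hρcdef
  have hSsub : S ⊆ Icc s t₀ ×ˢ closedBall (0 : EuclideanSpace ℝ (Fin N)) ρc := by
    rintro ⟨τ, y⟩ ⟨⟨hτ, hy⟩, hwle⟩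
    refine ⟨hτ, ?_⟩
    simp only [mem_closedBall, dist_zero_right]
    simp only [hwdef, mem_preimage, mem_Iic] at hwle
    have hu1 : u τ y ≤ Cu := le_trans (le_abs_self _) (hCu τ y)
    have he1 : (0:ℝ) < P * Real.exp (-γ*(τ-s)) := by positivity
    have hyn : (0:ℝ) < ‖y‖ := lt_of_lt_of_le hR₀ hy
    have he2 : (0:ℝ) < P * R₀ * Real.exp (κ*(τ-s)) * ‖y‖⁻¹ := by positivity
    have he3 : σ * Real.exp (K*τ) * (1 + ‖y‖^2) ≤ Cu := by linarith
    have he4 : Real.exp (K*s) ≤ Real.exp (K*τ) := by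
      apply Real.exp_le_exp.2
      exact mul_le_mul_of_nonneg_left hτ.1 hK.le
    have he5 : σ * Real.exp (K*s) * (1 + ‖y‖^2) ≤ Cu := by
      have hpos : (0:ℝ) ≤ 1 + ‖y‖^2 := by positivity
      have hm := mul_le_mul_of_nonneg_right (mul_le_mul_of_nonneg_left he4 hσ.le) hpos
      linarith
    have he6 : 1 + ‖y‖^2 ≤ Cu / (σ * Real.exp (K*s)) := by
      rw [le_div_iff₀ (by positivity)]
      nlinarith
    have he7 : ‖y‖^2 ≤ Cu / (σ * Real.exp (K*s)) := by nlinarith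
    calc ‖y‖ = Real.sqrt (‖y‖^2) := (Real.sqrt_sq (norm_nonneg y)).symm
    _ ≤ ρc := Real.sqrt_le_sqrt he7
  have hScompact : IsCompact S :=
    ((isCompact_Icc.prod (isCompact_closedBall _ _)).of_isClosed_subset hSclosed hSsub)
  obtain ⟨pstar, hpS, hpmin⟩ := hScompact.exists_isMinOn hSne continuous_fst.continuousOn
  obtain ⟨⟨htstar, hxstar⟩, hwstar⟩ := hpS
  set tstar := pstar.1 with htsdef
  set xstar := pstar.2 with hxsdef
  have hwstar' : w (tstar, xstar) ≤ 0 := hwstar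
  have hxn : (0:ℝ) < ‖xstar‖ := lt_of_lt_of_le hR₀ hxstar
  -- positivity at initial time
  have hinit : ∀ y : EuclideanSpace ℝ (Fin N), R₀ ≤ ‖y‖ → 0 < w (s, y) := by
    intro y hy
    have hyn : (0:ℝ) < ‖y‖ := lt_of_lt_of_le hR₀ hy
    have hus : u s y < P := hbound s (le_trans hst ht₀) y hy
    simp only [hwdef]
    have h1 : Real.exp (-γ*(s-s)) = 1 := by norm_num
    have h2 : Real.exp (κ*(s-s)) = 1 := by norm_num
    rw [h1, h2]
    have : (0:ℝ) < P * R₀ * 1 * ‖y‖⁻¹ := by positivity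
    have : (0:ℝ) < σ * Real.exp (K*s) * (1 + ‖y‖^2) := by positivity
    linarith
  -- positivity at spatial boundary
  have hbdry : ∀ τ ∈ Icc s t₀, ∀ y : EuclideanSpace ℝ (Fin N), ‖y‖ = R₀ → 0 < w (τ, y) := by
    intro τ hτ y hy
    have huy : u τ y < P := hbound τ (le_trans hτ.2 ht₀) y (le_of_eq hy.symm)
    simp only [hwdef]
    have h2 : P * R₀ * Real.exp (κ*(τ-s)) * ‖y‖⁻¹ = P * Real.exp (κ*(τ-s)) := by
      rw [hy]; field_simp
    rw [h2]
    have h3 : (1:ℝ) ≤ Real.exp (κ*(τ-s)) := by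
      apply Real.one_le_exp
      exact mul_nonneg hκ.le (by linarith [hτ.1])
    have h4 : P ≤ P * Real.exp (κ*(τ-s)) := by
      have := mul_le_mul_of_nonneg_left h3 hPpos.le
      linarith
    have h5 : (0:ℝ) < P * Real.exp (-γ*(τ-s)) := by positivity
    have h6 : (0:ℝ) < σ * Real.exp (K*τ) * (1 + ‖y‖^2) := by positivity
    linarith
  -- s < tstar
  have hsts : s < tstar := by
    rcases lt_or_eq_of_le htstar.1 with h | h
    · exact h
    · exfalso
      have hthis := hinit xstar hxstar
      rw [h] at hthis
      linarith [hwstar']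
  -- R₀ < ‖xstar‖
  have hxgt : R₀ < ‖xstar‖ := by
    rcases lt_or_eq_of_le hxstar with h | h
    · exact h
    · exfalso
      have := hbdry tstar htstar xstar h.symm
      linarith [hwstar']
  -- nonnegativity up to time tstar
  have hnonneg : ∀ τ ∈ Icc s t₀, ∀ y : EuclideanSpace ℝ (Fin N), R₀ ≤ ‖y‖ → τ ≤ tstar →
      0 ≤ w (τ, y) := by
    intro τ hτ y hy hτt
    rcases lt_or_eq_of_le hτt with h | h
    · -- strictly before tstar : not in S
      by_contra hneg
      push_neg at hneg
      have hmem : (τ, y) ∈ S := ⟨⟨hτ, hy⟩, le_of_lt hneg⟩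
      have h2 := hpmin hmem
      exact absurd h2 (not_le.2 h)
    · -- τ = tstar : limit of earlier times
      have hcont : Continuous (fun τ' : ℝ => w (τ', y)) := by
        simp only [hwdef]
        apply Continuous.sub
        · apply Continuous.add
          apply Continuous.add
          · exact continuous_const.mul (Real.continuous_exp.comp
              (continuous_const.mul (continuous_id.sub continuous_const)))
          · exact (continuous_const.mul (Real.continuous_exp.comp
              (continuous_const.mul (continuous_id.sub continuous_const)))).mul continuous_const
          · exact (continuous_const.mul (Real.continuous_exp.comp
              (continuous_const.mul continuous_id))).mul continuous_const
        · exact (hsol.2.1 y).continuous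
      have hsτ : s < τ := by rw [h]; exact hsts
      have hne : (𝓝[<] τ).NeBot := inferInstance
      have htt : Tendsto (fun τ' : ℝ => w (τ', y)) (𝓝[<] τ) (𝓝 (w (τ, y))) :=
        (hcont.tendsto τ).mono_left nhdsWithin_le_nhds
      refine ge_of_tendsto htt ?_
      have hIoo : Ioo s τ ∈ 𝓝[<] τ :=
        mem_nhdsWithin.2 ⟨Ioi s, isOpen_Ioi, hsτ, fun r hr => ⟨hr.1, hr.2⟩⟩
      filter_upwards [hIoo] with r hr
      by_contra hneg
      push_neg at hneg
      have hmem : (r, y) ∈ S := ⟨⟨⟨le_of_lt hr.1, le_trans (le_of_lt hr.2) hτ.2⟩, hy⟩,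
        le_of_lt hneg⟩
      have h2 := hpmin hmem
      have hrts : r < tstar := by rw [← h]; exact hr.2
      exact absurd h2 (not_le.2 hrts)
  have hw0 : w (tstar, xstar) = 0 :=
    le_antisymm hwstar' (hnonneg tstar htstar xstar hxstar le_rfl)
  -- set up spatial function
  set A : ℝ := P * Real.exp (-γ*(tstar-s)) with hAdef
  set B : ℝ := P * R₀ * Real.exp (κ*(tstar-s)) with hBdef
  set C : ℝ := σ * Real.exp (K*tstar) with hCdef
  have hApos : 0 < A := by positivity
  have hBpos : 0 < B := by positivity
  have hCpos : 0 < C := by positivity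
  have hXw : ∀ y : EuclideanSpace ℝ (Fin N),
      A + B * ‖y‖⁻¹ + C * (1 + ‖y‖^2) - u tstar y = w (tstar, y) := by
    intro y
    simp only [hwdef, hAdef, hBdef, hCdef]
  have hlocmin : IsLocalMin (fun y => A + B * ‖y‖⁻¹ + C * (1 + ‖y‖^2) - u tstar y) xstar := by
    have hopen : IsOpen {y : EuclideanSpace ℝ (Fin N) | R₀ < ‖y‖} :=
      isOpen_lt continuous_const continuous_norm
    have hxin : xstar ∈ {y : EuclideanSpace ℝ (Fin N) | R₀ < ‖y‖} := hxgt
    filter_upwards [hopen.eventually_mem hxin] with y hy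
    show A + B * ‖xstar‖⁻¹ + C * (1 + ‖xstar‖^2) - u tstar xstar
        ≤ A + B * ‖y‖⁻¹ + C * (1 + ‖y‖^2) - u tstar y
    rw [hXw y, hXw xstar, hw0]
    exact hnonneg tstar htstar y (le_of_lt hy) le_rfl
  have hxne : xstar ≠ 0 := by
    intro h
    rw [h] at hxn
    simp at hxn
  have hlap : lap (u tstar) xstar ≤ B * ((3 - (N:ℝ)) * ‖xstar‖⁻¹^3) + C * (2*(N:ℝ)) :=
    r15_key_lap_bound (u tstar) (hsol.2.2.1 tstar) A B C hxne hlocmin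
  -- time derivative
  set dudt : ℝ := deriv (fun τ => u τ xstar) tstar with hdudt
  have hG : HasDerivAt (fun τ => w (τ, xstar))
      (-γ * (P * Real.exp (-γ*(tstar-s)))
        + κ * (P * R₀ * Real.exp (κ*(tstar-s)) * ‖xstar‖⁻¹)
        + K * (σ * Real.exp (K*tstar) * (1 + ‖xstar‖^2)) - dudt) tstar := by
    have h1 : HasDerivAt (fun τ : ℝ => P * Real.exp (-γ*(τ-s)))
        (P * (Real.exp (-γ*(tstar-s)) * (-γ))) tstar := by
      have := ((((hasDerivAt_id tstar).sub_const s).const_mul (-γ)).exp).const_mul P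
      simpa using this
    have h2 : HasDerivAt (fun τ : ℝ => P * R₀ * Real.exp (κ*(τ-s)) * ‖xstar‖⁻¹)
        ((P * R₀ * (Real.exp (κ*(tstar-s)) * κ)) * ‖xstar‖⁻¹) tstar := by
      have := (((((hasDerivAt_id tstar).sub_const s).const_mul κ).exp).const_mul
        (P * R₀)).mul_const ‖xstar‖⁻¹
      simpa using this
    have h3 : HasDerivAt (fun τ : ℝ => σ * Real.exp (K*τ) * (1 + ‖xstar‖^2))
        ((σ * (Real.exp (K*tstar) * K)) * (1 + ‖xstar‖^2)) tstar := by
      have := ((((hasDerivAt_id tstar).const_mul K).exp).const_mul σ).mul_const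
        (1 + ‖xstar‖^2)
      simpa using this
    have h4 : HasDerivAt (fun τ => u τ xstar) dudt tstar :=
      ((hsol.2.1 xstar) tstar).hasDerivAt
    have := ((h1.add h2).add h3).sub h4
    exact this.congr_deriv (by ring)
  have hGmin : ∀ τ ∈ Icc s tstar, (fun τ => w (τ, xstar)) tstar ≤ (fun τ => w (τ, xstar)) τ := by
    intro τ hτ
    simp only
    rw [hw0]
    exact hnonneg τ ⟨hτ.1, le_trans hτ.2 htstar.2⟩ xstar hxstar hτ.2
  have hder := r15_deriv_nonpos_at_right_min hsts hG hGmin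
  -- PDE at (tstar, xstar)
  have hPDE : dudt = lap (u tstar) xstar + f (u tstar xstar) := hsol.2.2.2 tstar xstar
  -- f bound
  set uval : ℝ := u tstar xstar with huvdef
  have huP : uval < P := hbound tstar (le_trans htstar.2 ht₀) xstar hxstar
  have hfu : f uval ≤ -γ * uval := hγf uval ⟨hpos tstar xstar, le_of_lt huP⟩
  -- the zero identity
  have hzero : A + B * ‖xstar‖⁻¹ + C * (1 + ‖xstar‖^2) - uval = 0 := by
    rw [hXw]; exact hw0
  -- final arithmetic
  have hh : ‖xstar‖⁻¹ ≤ R₀⁻¹ := by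
    apply inv_anti₀ hR₀ hxstar
  have hhpos : 0 < ‖xstar‖⁻¹ := by positivity
  have hN3 : (3 - (N:ℝ)) ≤ 2 := by
    have : (1:ℝ) ≤ (N:ℝ) := by exact_mod_cast hN
    linarith
  have hstep1 : B * ((3 - (N:ℝ)) * ‖xstar‖⁻¹^3) ≤ κ * (B * ‖xstar‖⁻¹) :=
    r15_step1_arith hBpos hhpos hh hR₀ hκdef hN3
  -- combine : derivative expression ≤ 0
  rw [hPDE] at hder
  -- substitute
  have hA' : P * Real.exp (-γ*(tstar-s)) = A := rfl
  have hB' : P * R₀ * Real.exp (κ*(tstar-s)) * ‖xstar‖⁻¹ = B * ‖xstar‖⁻¹ := by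
    rw [hBdef]
  have hC' : σ * Real.exp (K*tstar) * (1 + ‖xstar‖^2) = C * (1 + ‖xstar‖^2) := by
    rw [hCdef]
  rw [hA', hB', hC'] at hder
  have hr2pos : (0:ℝ) < ‖xstar‖^2 := by positivity
  have hNn1 : (1:ℝ) ≤ (N:ℝ) := by exact_mod_cast hN
  have hlap2 : lap (u tstar) xstar ≤ κ * (B * ‖xstar‖⁻¹) + C * (2*(N:ℝ)) :=
    le_trans hlap (by linarith)
  exact r15_contra_arith hγ hBpos hCpos hhpos hr2pos hNn1 hlap2 hfu hzero hKdef hder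

/-- **Remark 1.5.** If `f < 0` on `(0,η]` and the positive bounded entire solution `u`
satisfies `limsup_{|x|→∞} sup_{t ≤ 0} u(t,x) ≤ η`, then `u` is localized in the past. -/
theorem remark_1_5 (N : ℕ) (hN : 1 ≤ N) (f : ℝ → ℝ) (hf : Hyp11 f)
    (η : ℝ) (hη : 0 < η) (hfneg : ∀ s ∈ Ioc (0:ℝ) η, f s < 0)
    (u : ℝ → EuclideanSpace ℝ (Fin N) → ℝ)
    (hsol : IsEntireSolution f u) (hpos : PositiveSol u) (hbdd : BoundedSol u)
    (hlimsup : ∀ ε > (0:ℝ), ∃ R : ℝ, ∀ x : EuclideanSpace ℝ (Fin N), R ≤ ‖x‖ →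
      ∀ t ≤ (0:ℝ), u t x < η + ε) :
    LocalizedInPast u := by
  obtain ⟨Cu, hCu⟩ := hbdd
  obtain ⟨δ, hδ, hPneg⟩ := r15_exists_delta f hf η hη hfneg
  have hPpos : (0:ℝ) < η + δ := by linarith
  obtain ⟨γ, hγ, hγf⟩ := r15_exists_gamma f hf (η+δ) hPpos hPneg
  obtain ⟨R₀', hR₀'⟩ := hlimsup δ hδ
  set R₀ : ℝ := max R₀' 1 with hR₀def
  have hR₀pos : (0:ℝ) < R₀ := lt_of_lt_of_le one_pos (le_max_right _ _)
  have hbound : ∀ t ≤ (0:ℝ), ∀ x : EuclideanSpace ℝ (Fin N), R₀ ≤ ‖x‖ → u t x < η + δ :=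
    fun t ht x hx => hR₀' x (le_trans (le_max_left _ _) hx) t ht
  intro ε hε
  -- choose the backward time length τ0
  have htend : Tendsto (fun τ : ℝ => (η+δ) * Real.exp (-γ*τ)) atTop (𝓝 0) := by
    have h1 : Tendsto (fun τ : ℝ => γ*τ) atTop atTop :=
      Tendsto.const_mul_atTop hγ tendsto_id
    have h2 : Tendsto (fun τ : ℝ => -(γ*τ)) atTop atBot := tendsto_neg_atTop_atBot.comp h1
    have h3 : Tendsto (fun τ : ℝ => Real.exp (-(γ*τ))) atTop (𝓝 0) :=
      Real.tendsto_exp_atBot.comp h2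
    have h4 := h3.const_mul (η+δ)
    simp only [mul_zero] at h4
    convert h4 using 2 with τ
    · ring_nf
  obtain ⟨τ0, hτsmall, hτnn⟩ :=
    ((htend.eventually_lt_const (half_pos hε)).and (eventually_ge_atTop (0:ℝ))).exists
  -- choose the radius
  set Aq : ℝ := (η+δ) * R₀ * Real.exp ((2/R₀^2)*τ0) with hAqdef
  have hAqpos : 0 < Aq := by positivity
  set R₁ : ℝ := max R₀ (Aq * (2/ε) + 1) with hR₁def
  refine ⟨R₁, fun t ht x hx => ?_⟩
  have hxR₀ : R₀ ≤ ‖x‖ := le_trans (le_max_left _ _) hx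
  have hxpos : (0:ℝ) < ‖x‖ := lt_of_lt_of_le hR₀pos hxR₀
  have hkey : ∀ σ > (0:ℝ), u t x < (η+δ) * Real.exp (-γ*τ0) + Aq * ‖x‖⁻¹
      + σ * Real.exp ((2*(N:ℝ))*t) * (1 + ‖x‖^2) := by
    intro σ hσ
    have h := r15_key hN f u hsol hpos Cu hCu (η+δ) γ R₀ hPpos hγ hR₀pos hγf hbound
      (t - τ0) t (by linarith) ht σ hσ t ⟨by linarith, le_rfl⟩ x hxR₀
    rw [show t - (t - τ0) = τ0 by ring] at h
    exact h
  have hle : u t x ≤ (η+δ) * Real.exp (-γ*τ0) + Aq * ‖x‖⁻¹ := by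
    by_contra hgt
    push_neg at hgt
    set c : ℝ := Real.exp ((2*(N:ℝ))*t) * (1 + ‖x‖^2) with hcdef
    have hc : 0 < c := by positivity
    set V : ℝ := (η+δ) * Real.exp (-γ*τ0) + Aq * ‖x‖⁻¹ with hVdef
    have hnum : 0 < u t x - V := by linarith
    have h2 := hkey ((u t x - V)/(2*c)) (by positivity)
    have h3 : ((u t x - V)/(2*c)) * Real.exp ((2*(N:ℝ))*t) * (1 + ‖x‖^2)
        = (u t x - V)/2 := by
      rw [hcdef] at *
      field_simp
    rw [h3] at h2
    rw [hVdef] at h2 hgt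
    linarith [h2, hgt]
  have h2nd : Aq * ‖x‖⁻¹ < ε/2 := by
    have hxRc : Aq * (2/ε) + 1 ≤ ‖x‖ := le_trans (le_max_right _ _) hx
    rw [show Aq * ‖x‖⁻¹ = Aq / ‖x‖ from by rw [div_eq_mul_inv]]
    rw [div_lt_iff₀ hxpos]
    have hq : (ε/2) * (Aq * (2/ε)) = Aq := by field_simp
    have hmul := mul_le_mul_of_nonneg_left hxRc (le_of_lt (half_pos hε))
    nlinarith
  have hub : u t x < ε := by linarith
  rw [abs_of_pos (hpos t x)]
  exact hub
end
end

section
/- Let N ≥ 1, let f : [0,+∞) → ℝ be C¹ with f(0) = 0, and let Φ ∈ C²([0,+∞)) satisfy Φ''(r) + ((N−1)/r) Φ'(r) + f(Φ(r)) = 0 for all r ∈ (0,+∞), with Φ > 0 on [0,+∞), Φ' < 0 on (0,+∞), Φ'(0) = 0, Φ(r) → 0 and Φ'(r) → 0 as r → +∞, and assume there are C > 0 and ν > 0 with Φ(r) + |Φ'(r)| ≤ C e^{−νr} for all r ≥ 0. Then the integral ∫₀^{+∞} Φ'(r)²/r dr is finite and F(Φ(0)) = (N−1) ∫₀^{+∞}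 Φ'(r)²/r dr, where F(s) = ∫₀^s f(σ) dσ; in particular, F(Φ(0)) = 0 if N = 1 and F(Φ(0)) > 0 if N ≥ 2. -/
open Set Filter Topology Metric MeasureTheory

noncomputable section

/-- Radial Pohozaev-type identity: for a positive decreasing radial profile `Φ` of a
localized steady state, with exponential decay, the integral `∫₀^∞ Φ'(r)²/r dr` is
finite and `F(Φ(0)) = (N−1) ∫₀^∞ Φ'(r)²/r dr`; in particular `F(Φ(0)) = 0` if
`N = 1` and `F(Φ(0)) > 0` if `N ≥ 2`. -/
theorem radial_energy_identity (N : ℕ) (hN : 1 ≤ N)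
    (f : ℝ → ℝ) (hfC : ContDiffOn ℝ 1 f (Ici 0)) (hf0 : f 0 = 0)
    (Φ : ℝ → ℝ) (hΦC : ContDiffOn ℝ 2 Φ (Ici 0))
    (hode : ∀ r > (0:ℝ),
      derivWithin (derivWithin Φ (Ici 0)) (Ici 0) r
        + (((N:ℝ) - 1) / r) * derivWithin Φ (Ici 0) r + f (Φ r) = 0)
    (hΦpos : ∀ r ≥ (0:ℝ), 0 < Φ r)
    (hΦ'neg : ∀ r > (0:ℝ), derivWithin Φ (Ici 0) r < 0)
    (hΦ'0 : derivWithin Φ (Ici 0) 0 = 0)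
    (hΦlim : Tendsto Φ atTop (𝓝 0))
    (hΦ'lim : Tendsto (derivWithin Φ (Ici 0)) atTop (𝓝 0))
    (C ν : ℝ) (hC : 0 < C) (hν : 0 < ν)
    (hdec : ∀ r ≥ (0:ℝ), Φ r + |derivWithin Φ (Ici 0) r| ≤ C * Real.exp (-ν * r)) :
    IntegrableOn (fun r => (derivWithin Φ (Ici 0) r) ^ 2 / r) (Ioi 0) ∧
    Fint f (Φ 0) = ((N:ℝ) - 1) * ∫ r in Ioi (0:ℝ), (derivWithin Φ (Ici 0) r) ^ 2 / r ∧
    (N = 1 → Fint f (Φ 0) = 0) ∧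
    (2 ≤ N → 0 < Fint f (Φ 0)) := by
  set Φ' := derivWithin Φ (Ici 0) with hΦ'def
  set Φ'' := derivWithin Φ' (Ici 0) with hΦ''def
  have hfcont : ContinuousOn f (Ici 0) := hfC.continuousOn
  have hΦ'C : ContDiffOn ℝ 1 Φ' (Ici 0) :=
    hΦC.derivWithin (uniqueDiffOn_Ici 0) (by norm_num)
  have hΦ'cont : ContinuousOn Φ' (Ici 0) := hΦ'C.continuousOn
  have hΦcont : ContinuousOn Φ (Ici 0) := hΦC.continuousOn
  -- derivative facts at interior points
  have hdΦ : ∀ r > (0:ℝ), HasDerivAt Φ (Φ' r) r := by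
    intro r hr
    have hmem : Ici (0:ℝ) ∈ 𝓝 r := mem_of_superset (Ioi_mem_nhds hr) Ioi_subset_Ici_self
    have := ((hΦC.differentiableOn (by norm_num)) r (le_of_lt hr)).differentiableAt hmem
    rw [hΦ'def, derivWithin_of_mem_nhds hmem]
    exact this.hasDerivAt
  have hdΦ' : ∀ r > (0:ℝ), HasDerivAt Φ' (Φ'' r) r := by
    intro r hr
    have hmem : Ici (0:ℝ) ∈ 𝓝 r := mem_of_superset (Ioi_mem_nhds hr) Ioi_subset_Ici_self
    have := ((hΦ'C.differentiableOn (by norm_num)) r (le_of_lt hr)).differentiableAt hmem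
    rw [hΦ''def, derivWithin_of_mem_nhds hmem]
    exact this.hasDerivAt
  -- FTC
  have hFTC : ∀ s > (0:ℝ), HasDerivAt (Fint f) (f s) s := by
    intro s hs
    have hint : IntervalIntegrable f volume 0 s :=
      (hfcont.mono (by rw [uIcc_of_le hs.le]; exact Icc_subset_Ici_self)).intervalIntegrable
    have hmeas : StronglyMeasurableAtFilter f (𝓝 s) volume :=
      (hfcont.mono Ioi_subset_Ici_self).stronglyMeasurableAtFilter isOpen_Ioi s hs
    have hca : ContinuousAt f s :=
      (hfcont.mono Ioi_subset_Ici_self).continuousAt (Ioi_mem_nhds hs)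
    exact intervalIntegral.integral_hasDerivAt_right hint hmeas hca
  -- monotonicity: Φ r ≤ Φ 0 for r ≥ 0
  have hmono : ∀ r ≥ (0:ℝ), Φ r ≤ Φ 0 := by
    have : StrictAntiOn Φ (Ici 0) := by
      apply strictAntiOn_of_deriv_neg (convex_Ici 0) hΦcont
      intro x hx
      rw [interior_Ici] at hx
      rw [(hdΦ x hx).deriv]
      exact hΦ'neg x hx
    intro r hr
    rcases eq_or_lt_of_le hr with h | h
    · rw [← h]
    · exact (this (self_mem_Ici) hr h).le
  -- bound |Φ' r| ≤ K * r on [0,1]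
  have hΦ''cont : ContinuousOn Φ'' (Ici 0) := by
    have : ContDiffOn ℝ 0 Φ'' (Ici 0) := hΦ'C.derivWithin (uniqueDiffOn_Ici 0) (by norm_num)
    exact this.continuousOn
  obtain ⟨K, hK⟩ := (isCompact_Icc (a := (0:ℝ)) (b := 1)).exists_bound_of_continuousOn
    (hΦ''cont.mono Icc_subset_Ici_self)
  have hK0 : 0 ≤ K := le_trans (norm_nonneg _) (hK 0 (by norm_num))
  have hΦ'bound : ∀ r ∈ Icc (0:ℝ) 1, |Φ' r| ≤ K * r := by
    intro r hr
    have hdiff : DifferentiableOn ℝ Φ' (Icc (0:ℝ) 1) :=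
      (hΦ'C.differentiableOn (by norm_num)).mono Icc_subset_Ici_self
    have hbd : ∀ x ∈ Icc (0:ℝ) 1, ‖derivWithin Φ' (Icc (0:ℝ) 1) x‖ ≤ K := by
      intro x hx
      have h1 : HasDerivWithinAt Φ' (Φ'' x) (Icc (0:ℝ) 1) x :=
        (((hΦ'C.differentiableOn (by norm_num)) x hx.1).hasDerivWithinAt).mono
          Icc_subset_Ici_self
      rw [h1.derivWithin ((uniqueDiffOn_Icc (by norm_num)) x hx)]
      exact hK x hx
    have := Convex.norm_image_sub_le_of_norm_derivWithin_le hdiff hbd (convex_Icc 0 1)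
      (left_mem_Icc.2 (by norm_num)) hr
    simpa [hΦ'0, abs_of_nonneg hr.1] using this
  -- continuity of integrand on Ioi 0
  have hgcont : ContinuousOn (fun r => (Φ' r) ^ 2 / r) (Ioi 0) := by
    apply ContinuousOn.div
    · exact ((hΦ'cont.mono Ioi_subset_Ici_self).pow 2)
    · exact continuousOn_id
    · intro x hx; exact ne_of_gt hx
  -- integrability
  have hint : IntegrableOn (fun r => (Φ' r) ^ 2 / r) (Ioi 0) := by
    have h1 : IntegrableOn (fun r => (Φ' r) ^ 2 / r) (Ioc 0 1) := by
      apply Integrable.mono' (g := fun _ => K ^ 2)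
      · exact integrableOn_const measure_Ioc_lt_top.ne
      · exact (hgcont.mono Ioc_subset_Ioi_self).aestronglyMeasurable measurableSet_Ioc
      · filter_upwards [ae_restrict_mem measurableSet_Ioc] with r hr
        have h2 : |Φ' r| ≤ K * r := hΦ'bound r ⟨hr.1.le, hr.2⟩
        have h3 : (Φ' r) ^ 2 ≤ (K * r) ^ 2 := by
          rw [← sq_abs]; exact pow_le_pow_left₀ (abs_nonneg _) h2 2
        rw [Real.norm_eq_abs, abs_of_nonneg (div_nonneg (sq_nonneg _) hr.1.le)]
        rw [div_le_iff₀ hr.1]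
        calc (Φ' r) ^ 2 ≤ (K * r) ^ 2 := h3
          _ = K ^ 2 * r * r := by ring
          _ ≤ K ^ 2 * 1 * r := by
              apply mul_le_mul_of_nonneg_right _ hr.1.le
              apply mul_le_mul_of_nonneg_left hr.2 (sq_nonneg K)
          _ = K ^ 2 * r := by ring
    have h2 : IntegrableOn (fun r => (Φ' r) ^ 2 / r) (Ioi 1) := by
      apply Integrable.mono' (g := fun r => C ^ 2 * Real.exp (-(2 * ν) * r))
      · exact (Integrable.const_mul (exp_neg_integrableOn_Ioi 1 (by linarith)) _)
      · exact (hgcont.mono (Ioi_subset_Ioi (by norm_num))).aestronglyMeasurable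
          measurableSet_Ioi
      · filter_upwards [ae_restrict_mem measurableSet_Ioi] with r hr
        have hr0 : (0:ℝ) < r := lt_trans one_pos hr
        have hd : |Φ' r| ≤ C * Real.exp (-ν * r) := by
          have := hdec r hr0.le
          have := hΦpos r hr0.le
          linarith [hdec r hr0.le, hΦpos r hr0.le]
        rw [Real.norm_eq_abs, abs_of_nonneg (div_nonneg (sq_nonneg _) hr0.le)]
        calc (Φ' r) ^ 2 / r ≤ (Φ' r) ^ 2 / 1 := by
              apply div_le_div_of_nonneg_left (sq_nonneg _) one_pos hr.le
              
          _ = (Φ' r) ^ 2 := div_one _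
          _ ≤ (C * Real.exp (-ν * r)) ^ 2 := by
              rw [← sq_abs]; exact pow_le_pow_left₀ (abs_nonneg _) hd 2
          _ = C ^ 2 * Real.exp (-(2 * ν) * r) := by
              rw [mul_pow, ← Real.exp_nat_mul]
              ring_nf
    have := h1.union h2
    rwa [Ioc_union_Ioi_eq_Ioi (by norm_num : (0:ℝ) ≤ 1)] at this
  refine ⟨hint, ?_⟩
  -- energy
  set E : ℝ → ℝ := fun r => (1/2) * (Φ' r) ^ 2 + Fint f (Φ r) with hEdef
  have hdE : ∀ r ∈ Ioi (0:ℝ), HasDerivAt E (-(((N:ℝ)-1) * ((Φ' r)^2 / r))) r := by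
    intro r hr
    rw [mem_Ioi] at hr
    have h1 : HasDerivAt (fun s => (1/2 : ℝ) * (Φ' s)^2) (Φ' r * Φ'' r) r := by
      have h2 := ((hdΦ' r hr).pow 2).const_mul (1/2 : ℝ)
      refine h2.congr_deriv ?_; simp; ring
    have h2 : HasDerivAt (fun s => Fint f (Φ s)) (f (Φ r) * Φ' r) r :=
      (hFTC (Φ r) (hΦpos r hr.le)).comp r (hdΦ r hr)
    have h3 := h1.add h2
    refine h3.congr_deriv ?_
    have hode' := hode r hr
    have hΦ''eq : Φ'' r = -(((N:ℝ)-1)/r) * Φ' r - f (Φ r) := by linarith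
    rw [hΦ''eq]
    field_simp
    ring
  have hintg : IntegrableOn (fun r => -(((N:ℝ)-1) * ((Φ' r)^2 / r))) (Ioi 0) := by
    have := (hint.const_mul (((N:ℝ)-1))).neg
    exact this
  have hEcont : ContinuousWithinAt E (Ici 0) 0 := by
    apply ContinuousWithinAt.add
    · exact ((hΦ'cont 0 self_mem_Ici).pow 2).const_smul (1/2 : ℝ)
    · have hca : ContinuousAt (Fint f) (Φ 0) := (hFTC (Φ 0) (hΦpos 0 le_rfl)).continuousAt
      exact hca.comp_continuousWithinAt (hΦcont 0 self_mem_Ici)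
  -- limit of E at infinity
  obtain ⟨M, hM⟩ := (isCompact_Icc (a := (0:ℝ)) (b := Φ 0)).exists_bound_of_continuousOn
    (hfcont.mono Icc_subset_Ici_self)
  have hFlim : Tendsto (fun r => Fint f (Φ r)) atTop (𝓝 0) := by
    apply squeeze_zero_norm' (a := fun r => M * Φ r)
    · filter_upwards [eventually_ge_atTop (0:ℝ)] with r hr
      have hΦr : 0 < Φ r := hΦpos r hr
      have : ‖∫ σ in (0:ℝ)..(Φ r), f σ‖ ≤ M * |Φ r - 0| := by
        apply intervalIntegral.norm_integral_le_of_norm_le_const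
        intro x hx
        rw [uIoc_of_le hΦr.le] at hx
        exact hM x ⟨hx.1.le, hx.2.trans (hmono r hr)⟩
      simpa [Fint, abs_of_nonneg hΦr.le] using this
    · have := hΦlim.const_mul M
      simpa using this
  have hElim : Tendsto E atTop (𝓝 0) := by
    have h1 : Tendsto (fun r => (1/2 : ℝ) * (Φ' r)^2) atTop (𝓝 0) := by
      have := (hΦ'lim.pow 2).const_mul (1/2 : ℝ)
      simpa using this
    have h4 := h1.add hFlim
    simpa [hEdef] using h4
  have hkey := MeasureTheory.integral_Ioi_of_hasDerivAt_of_tendsto hEcont hdE hintg hElim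
  have hE0 : E 0 = Fint f (Φ 0) := by simp [hEdef, hΦ'0]
  rw [hE0, MeasureTheory.integral_neg, MeasureTheory.integral_const_mul] at hkey
  have hiden : Fint f (Φ 0) = ((N:ℝ) - 1) * ∫ r in Ioi (0:ℝ), (Φ' r) ^ 2 / r := by
    linarith
  refine ⟨hiden, ?_, ?_⟩
  · intro h1
    subst h1
    simpa using hiden
  · intro h2
    have hpos : 0 < ∫ r in Ioi (0:ℝ), (Φ' r) ^ 2 / r := by
      rw [setIntegral_pos_iff_support_of_nonneg_ae ?_ hint]
      · have hsub : Ioi (0:ℝ) ⊆ Function.support (fun r => (Φ' r) ^ 2 / r) := by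
          intro r hr
          rw [mem_Ioi] at hr
          have h3 : Φ' r ≠ 0 := ne_of_lt (hΦ'neg r hr)
          simp only [Function.mem_support]
          positivity
        have : Function.support (fun r => (Φ' r) ^ 2 / r) ∩ Ioi 0 = Ioi 0 :=
          inter_eq_self_of_subset_right hsub
        rw [this, Real.volume_Ioi]
        exact ENNReal.zero_lt_top
      · filter_upwards [ae_restrict_mem measurableSet_Ioi] with r hr
        exact div_nonneg (sq_nonneg _) (le_of_lt hr)
    have hN1 : (1:ℝ) ≤ (N:ℝ) - 1 := by
      have : (2:ℝ) ≤ (N:ℝ) := by exact_mod_cast h2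
      linarith
    rw [hiden]
    nlinarith
end
end
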